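/- arXiv:2506.20908 — 6 statements merged into one kernel-verified Lean document; each statement's English description precedes it below -/
import Mathlib

section
/- Let t ∈ (0,1], η ∈ [0,1), and μ > 0, and define γ = (1/t)·(1 − (1 − t·η)/e^{t/μ}). If additionally (when t < 1) μ ≥ t / ln((1 − t·η)/(1 − t)), then η ≤ γ ≤ 1. -/
open Real

lemma Real.exp_mul_le_of_le_log_div {x a b : ℝ} (ha : 0 < a) (hb : 0 < b)
    (h : x ≤ log (a / b)) : exp x * b ≤ a :=
  (le_div_iff₀ hb).mp ((le_log_iff_exp_le (div_pos ha hb)).mp h)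

lemma exp_div_mul_one_sub_le {t η μ : ℝ} (ht : t ∈ Set.Ioc (0:ℝ) 1) (hη : η ∈ Set.Ico (0:ℝ) 1)
    (hμ' : t < 1 → μ ≥ t / log ((1 - t * η) / (1 - t))) :
    exp (t / μ) * (1 - t) ≤ 1 - t * η := by
  obtain ⟨ht0, ht1⟩ := ht
  obtain ⟨hη0, hη1⟩ := hη
  rcases ht1.eq_or_lt with rfl | ht1
  · simp only [sub_self, mul_zero, one_mul, sub_nonneg, hη1.le]
  have h1t : 0 < 1 - t := by linarith
  have hratio : 1 < (1 - t * η) / (1 - t) := by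
    rw [lt_div_iff₀ h1t]
    nlinarith
  have hlog : 0 < log ((1 - t * η) / (1 - t)) := log_pos hratio
  have hμ : 0 < μ := (div_pos ht0 hlog).trans_le (hμ' ht1)
  refine exp_mul_le_of_le_log_div (by nlinarith) h1t ?_
  exact (div_le_comm₀ hlog hμ).mp (hμ' ht1)

/-- For t ∈ (0,1], η ∈ [0,1), μ > 0 and
γ = (1/t)·(1 − (1 − t·η)/e^{t/μ}), if (when t < 1)
μ ≥ t / ln((1 − t·η)/(1 − t)), then η ≤ γ ≤ 1. -/
theorem stmt_0 (t η μ γ : ℝ)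
    (ht : t ∈ Set.Ioc (0:ℝ) 1) (hη : η ∈ Set.Ico (0:ℝ) 1) (hμ : 0 < μ)
    (hμ' : t < 1 → μ ≥ t / Real.log ((1 - t * η) / (1 - t)))
    (hγ : γ = (1 / t) * (1 - (1 - t * η) / Real.exp (t / μ))) :
    η ≤ γ ∧ γ ≤ 1 := by
  obtain ⟨ht0, ht1⟩ := ht
  have hc : 0 ≤ 1 - t * η := by nlinarith [hη.1, hη.2]
  have hE : 1 ≤ exp (t / μ) := one_le_exp (div_nonneg ht0.le hμ.le)
  have hγ' : γ = (1 - (1 - t * η) / exp (t / μ)) / t := by rw [hγ, one_div_mul_eq_div]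
  rw [hγ', le_div_iff₀ ht0, div_le_one ht0]
  constructor
  · linarith [div_le_self hc hE]
  · have hupper : 1 - t ≤ (1 - t * η) / exp (t / μ) := by
      rw [le_div_iff₀ (exp_pos _), mul_comm]
      exact exp_div_mul_one_sub_le ⟨ht0, ht1⟩ hη hμ'
    linarith
end

section
/- Let W₀ denote the principal branch of the Lambert W function and let f(z) = 1 + W₀(−e^{−z−1}). Then for every z ∈ (1 + W₀(−2e^{−2})/2, 1], one has f(z) < z. -/
/-!
Since `t ↦ t eᵗ` is increasing on `[-1, ∞)`, the claim `W₀(-e^{-z-1}) < z - 1` amounts to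
`-e^{-z-1} < (z - 1) e^{z-1}`, i.e. to `g z < 1` for `g t = (1 - t) e^{2t}`. The function `g` is
decreasing on `[1/2, ∞)`, and the defining equation of `u = W₀(-2e^{-2})` says exactly that
`g (1 + u/2) = 1`, where `1 + u/2 ≥ 1/2` because `u ≥ -1`.
-/

open Real Set

lemma strictMonoOn_mul_exp : StrictMonoOn (fun t : ℝ => t * exp t) (Ici (-1)) := by
  have hderiv (t : ℝ) : HasDerivAt (fun t : ℝ => t * exp t) (1 * exp t + t * exp t) t :=
    (hasDerivAt_id t).mul (hasDerivAt_exp t)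
  refine strictMonoOn_of_deriv_pos (convex_Ici _)
    (fun t _ => (hderiv t).continuousAt.continuousWithinAt) fun t ht => ?_
  rw [interior_Ici, mem_Ioi] at ht
  rw [(hderiv t).deriv]
  nlinarith [mul_pos (by linarith : (0 : ℝ) < t + 1) (exp_pos t)]

lemma strictAntiOn_one_sub_mul_exp_two_mul :
    StrictAntiOn (fun t : ℝ => (1 - t) * exp (2 * t)) (Ici (1 / 2)) := by
  have hderiv (t : ℝ) : HasDerivAt (fun t : ℝ => (1 - t) * exp (2 * t))
      (-1 * exp (2 * t) + (1 - t) * (exp (2 * t) * 2)) t :=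
    ((hasDerivAt_id t).const_sub 1).mul (by simpa using ((hasDerivAt_id t).const_mul 2).exp)
  refine strictAntiOn_of_deriv_neg (convex_Ici _)
    (fun t _ => (hderiv t).continuousAt.continuousWithinAt) fun t ht => ?_
  rw [interior_Ici, mem_Ioi] at ht
  rw [(hderiv t).deriv]
  nlinarith [mul_pos (by linarith : (0 : ℝ) < 2 * t - 1) (exp_pos (2 * t))]

lemma lt_of_mul_exp_lt_mul_exp {w a : ℝ} (ha : -1 ≤ a) (h : w * exp w < a * exp a) : w < a := by
  by_contra! haw
  exact h.not_ge (strictMonoOn_mul_exp.monotoneOn ha (ha.trans haw) haw)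

lemma neg_inv_exp_one_le_neg_two_mul_exp_neg_two : -(1 / exp 1) ≤ -(2 * exp (-2)) := by
  rw [one_div, ← exp_neg, neg_le_neg_iff]
  calc 2 * exp (-2) ≤ exp 1 * exp (-2) :=
        mul_le_mul_of_nonneg_right (by linarith [add_one_le_exp (1 : ℝ)]) (exp_pos _).le
    _ = exp (-1) := by rw [← exp_add]; norm_num

lemma neg_inv_exp_one_le_neg_exp {y : ℝ} (hy : y ≤ -1) : -(1 / exp 1) ≤ -exp y := by
  rw [one_div, ← exp_neg, neg_le_neg_iff]
  exact exp_le_exp.mpr hy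

lemma one_sub_mul_exp_two_mul_eq_one {u : ℝ} (hu : u * exp u = -(2 * exp (-2))) :
    (1 - (1 + u / 2)) * exp (2 * (1 + u / 2)) = 1 := by
  have hsplit : exp (2 * (1 + u / 2)) = exp 2 * exp u := by rw [← exp_add]; ring_nf
  have hcancel : exp 2 * exp (-2) = 1 := by rw [← exp_add]; norm_num
  rw [hsplit]
  linear_combination (-exp 2 / 2) * hu + hcancel

lemma neg_exp_lt_mul_exp_of_one_sub_mul_exp_lt_one {z : ℝ} (hz : (1 - z) * exp (2 * z) < 1) :
    -exp (-z - 1) < (z - 1) * exp (z - 1) := by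
  have hsplit : exp (2 * z) * exp (-z - 1) = exp (z - 1) := by rw [← exp_add]; ring_nf
  have h := mul_lt_mul_of_pos_right hz (exp_pos (-z - 1))
  rw [mul_assoc, hsplit, one_mul] at h
  linarith

/-- With W₀ the principal branch of the Lambert W function and
f(z) = 1 + W₀(−e^{−z−1}), for every z ∈ (1 + W₀(−2e^{−2})/2, 1] we have
f(z) < z. -/
theorem stmt_3 (W : ℝ → ℝ)
    (hW : ∀ x : ℝ, -(1 / Real.exp 1) ≤ x → W x * Real.exp (W x) = x)
    (hW' : ∀ x : ℝ, -(1 / Real.exp 1) ≤ x → -1 ≤ W x)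
    (z : ℝ) (hz : z ∈ Set.Ioc (1 + W (-(2 * Real.exp (-2))) / 2) 1) :
    1 + W (-Real.exp (-z - 1)) < z := by
  set u := W (-(2 * exp (-2)))
  have hu : u * exp u = -(2 * exp (-2)) := hW _ neg_inv_exp_one_le_neg_two_mul_exp_neg_two
  have hz₀ : 1 / 2 ≤ 1 + u / 2 := by linarith [hW' _ neg_inv_exp_one_le_neg_two_mul_exp_neg_two]
  have hz_half : 1 / 2 < z := hz₀.trans_lt hz.1
  have hg : (1 - z) * exp (2 * z) < 1 := by
    calc (1 - z) * exp (2 * z) < (1 - (1 + u / 2)) * exp (2 * (1 + u / 2)) :=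
          strictAntiOn_one_sub_mul_exp_two_mul hz₀ hz_half.le hz.1
      _ = 1 := one_sub_mul_exp_two_mul_eq_one hu
  have hw := hW _ (neg_inv_exp_one_le_neg_exp (y := -z - 1) (by linarith))
  have hlt := neg_exp_lt_mul_exp_of_one_sub_mul_exp_lt_one hg
  rw [← hw] at hlt
  linarith [lt_of_mul_exp_lt_mul_exp (by linarith) hlt]
end

section
/- For every t ∈ (1 + W₀(−2e^{−2})/2, 1], the quantity a = −W₀(−e^{−t−1}) satisfies 1 − t < a ≤ 1/e. -/
/-!
Writing `a = -W(-e^{-t-1})` and `b = -W(-2e^{-2})/2`, the defining equation of `W` gives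
`t = a - log a - 1` and `log b = 2b - 2`, while the principal branch forces `a ≤ 1` and `b ≤ 1/2`.
Both claims are then monotonicity statements for `x ↦ log x - c x`, which increases on `(0, 1/c]`:
with `c = 1` the hypothesis `t > 1 - b` becomes `a < b`, and also `a < 1/e`; with `c = 2` the
inequality `a < b` becomes `log a < 2a - 2`, i.e. `1 - t < a`.
-/

open Real Set

lemma strictMonoOn_log_sub_mul {c : ℝ} (hc : 0 < c) :
    StrictMonoOn (fun x => log x - c * x) (Ioc 0 c⁻¹) := by
  apply strictMonoOn_of_deriv_pos (convex_Ioc 0 c⁻¹)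
  · exact (continuousOn_log.mono fun x hx => hx.1.ne').sub (continuousOn_const.mul continuousOn_id)
  · intro x hx
    rw [interior_Ioc] at hx
    have hd : HasDerivAt (fun x => log x - c * x) (x⁻¹ - c) x := by
      simpa using (hasDerivAt_log hx.1.ne').fun_sub ((hasDerivAt_id' x).const_mul c)
    rw [hd.deriv, sub_pos, lt_inv_comm₀ hc hx.1]
    exact hx.2

lemma neg_pos_and_log_neg_add_of_mul_exp_eq_neg {w c : ℝ} (hc : 0 < c)
    (h : w * exp w = -c) : 0 < -w ∧ log (-w) + w = log c := by
  have hw : 0 < -w := by nlinarith [exp_pos w]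
  refine ⟨hw, ?_⟩
  have hc' : -w * exp w = c := by linarith
  rw [← hc', log_mul hw.ne' (exp_ne_zero w), log_exp]

lemma one_sub_lt_and_le_inv_exp_one {a b t : ℝ} (ha : a ∈ Ioc 0 1) (hb : b ∈ Ioc 0 (1 / 2))
    (hlog_a : t = a - log a - 1) (hlog_b : log b = 2 * b - 2) (htb : 1 - b < t) :
    1 - t < a ∧ a ≤ 1 / exp 1 := by
  have hf := strictMonoOn_log_sub_mul one_pos
  have hg := strictMonoOn_log_sub_mul two_pos
  have hb1 : b ∈ Ioc (0 : ℝ) 1⁻¹ := ⟨hb.1, by linarith [hb.2]⟩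
  have ha1 : a ∈ Ioc (0 : ℝ) 1⁻¹ := by rwa [inv_one]
  have hab : a < b := (hf.lt_iff_lt ha1 hb1).1 (by linarith)
  constructor
  · have := hg ⟨ha.1, by linarith [hb.2]⟩ (by rwa [one_div] at hb) hab
    simp only at this
    linarith
  · have he_inv : 1 / exp 1 ∈ Ioc (0 : ℝ) 1⁻¹ :=
      ⟨by positivity, by rw [inv_one, div_le_one (exp_pos 1)]; linarith [exp_one_gt_two]⟩
    have he_half : 1 / exp 1 ≤ 1 / 2 := one_div_le_one_div_of_le two_pos exp_one_gt_two.le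
    refine ((hf.lt_iff_lt ha1 he_inv).1 ?_).le
    simp only [one_div, log_inv, log_exp] at he_half ⊢
    linarith [hb.2]

/-- For every t ∈ (1 + W₀(−2e^{−2})/2, 1], the quantity
a = −W₀(−e^{−t−1}) satisfies 1 − t < a ≤ 1/e. -/
theorem stmt_5 (W : ℝ → ℝ)
    (hW : ∀ x : ℝ, -(1 / Real.exp 1) ≤ x → W x * Real.exp (W x) = x)
    (hW' : ∀ x : ℝ, -(1 / Real.exp 1) ≤ x → -1 ≤ W x)
    (t : ℝ) (ht : t ∈ Set.Ioc (1 + W (-(2 * Real.exp (-2))) / 2) 1) :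
    1 - t < -W (-Real.exp (-t - 1)) ∧
    -W (-Real.exp (-t - 1)) ≤ 1 / Real.exp 1 := by
  have hinv_e : 1 / exp 1 = exp (-1) := by rw [exp_neg, one_div]
  have hdom_b : -(1 / exp 1) ≤ -(2 * exp (-2)) := by
    have : exp (-1) = exp 1 * exp (-2) := by rw [← exp_add]; norm_num
    rw [neg_le_neg_iff, hinv_e, this]
    exact mul_le_mul_of_nonneg_right exp_one_gt_two.le (exp_pos _).le
  obtain ⟨hb, hlog_b⟩ :=
    neg_pos_and_log_neg_add_of_mul_exp_eq_neg (by positivity) (hW _ hdom_b)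
  have hb_le := hW' _ hdom_b
  set b := -W (-(2 * exp (-2))) / 2 with hb_def
  rw [log_mul two_ne_zero (exp_ne_zero _), log_exp,
    show -W (-(2 * exp (-2))) = 2 * b by rw [hb_def]; ring, log_mul two_ne_zero (by linarith)]
    at hlog_b
  have htb : 1 - b < t := by rw [hb_def]; linarith [ht.1]
  have hdom_a : -(1 / exp 1) ≤ -exp (-t - 1) := by
    rw [neg_le_neg_iff, hinv_e, exp_le_exp]
    linarith
  obtain ⟨ha, hlog_a⟩ := neg_pos_and_log_neg_add_of_mul_exp_eq_neg (exp_pos _) (hW _ hdom_a)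
  rw [log_exp] at hlog_a
  exact one_sub_lt_and_le_inv_exp_one ⟨ha, by linarith [hW' _ hdom_a]⟩ ⟨by linarith, by linarith⟩
    (by linarith) (by linarith) htb
end

section
/- For η ∈ [0,1), define ζ(η) = 2 − η + W₀(−(1−η)²·e^{η−2}). Then ζ(η) > 0. -/
open Real

lemma sq_one_sub_mul_exp_sub_two_le_exp_neg_one {η : ℝ} (h0 : 0 ≤ η) (h1 : η ≤ 1) :
    (1 - η) ^ 2 * exp (η - 2) ≤ exp (-1) :=
  calc (1 - η) ^ 2 * exp (η - 2) ≤ 1 * exp (-1) :=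
        mul_le_mul (by nlinarith) (exp_le_exp.2 (by linarith)) (exp_pos _).le zero_le_one
    _ = exp (-1) := one_mul _

theorem stmt_12_general (W : ℝ → ℝ)
    (hW' : ∀ x : ℝ, -(1 / Real.exp 1) ≤ x → -1 ≤ W x)
    (η : ℝ) (hη : η ∈ Set.Ico (0:ℝ) 1) :
    0 < 2 - η + W (-((1 - η) ^ 2 * Real.exp (η - 2))) := by
  have hx : -(1 / exp 1) ≤ -((1 - η) ^ 2 * exp (η - 2)) := by
    rw [one_div, ← exp_neg, neg_le_neg_iff]
    exact sq_one_sub_mul_exp_sub_two_le_exp_neg_one hη.1 hη.2.le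
  linarith [hW' _ hx, hη.2]

/-- For η ∈ [0,1), ζ(η) = 2 − η + W₀(−(1−η)²·e^{η−2}) > 0. -/
theorem stmt_12 (W : ℝ → ℝ)
    (hW : ∀ x : ℝ, -(1 / Real.exp 1) ≤ x → W x * Real.exp (W x) = x)
    (hW' : ∀ x : ℝ, -(1 / Real.exp 1) ≤ x → -1 ≤ W x)
    (η : ℝ) (hη : η ∈ Set.Ico (0:ℝ) 1) :
    0 < 2 - η + W (-((1 - η) ^ 2 * Real.exp (η - 2))) :=
  stmt_12_general W hW' η hη
end

section
/- For η ∈ [0,1) and ζ = 2 − η + W₀(−(1−η)²e^{η−2}), one has (1 − (1−η)e^{−ζ})/ζ < 1/(1−η). -/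
open Real

/-! With `a = 1 - η` and `w = W₀(-a²e^{-a-1})`, so that `ζ = a + 1 + w`, the defining equation
`w e^w = -a²e^{-a-1}` gives `e^{-ζ} = -w / a²`. Hence `1 - a e^{-ζ} = (a + w) / a`, and the claim
becomes `a + w < ζ`, which holds since `ζ - (a + w) = 1`; the principal branch `w ≥ -1` is what
makes `ζ ≥ a > 0`. -/

lemma sq_mul_exp_neg_sub_one_le {a : ℝ} (h0 : 0 ≤ a) (h1 : a ≤ 1) :
    a ^ 2 * exp (-a - 1) ≤ exp (-1) :=
  calc a ^ 2 * exp (-a - 1) ≤ 1 * exp (-1) := by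
        gcongr
        · exact pow_le_one₀ h0 h1
        · linarith
    _ = exp (-1) := one_mul _

lemma exp_neg_add_add_eq {a w : ℝ} (ha : a ≠ 0) (hw : w * exp w = -(a ^ 2 * exp (-a - 1))) :
    exp (-(a + 1 + w)) = -w / a ^ 2 := by
  have hsplit : exp (-(a + 1 + w)) = exp (-a - 1) * exp (-w) := by
    rw [← exp_add]; ring_nf
  have hcancel : exp w * exp (-w) = 1 := by rw [← exp_add, add_neg_cancel, exp_zero]
  rw [hsplit, eq_div_iff (by positivity)]
  linear_combination exp (-w) * hw - w * hcancel

lemma one_sub_mul_exp_neg_div_lt {a w : ℝ} (ha : 0 < a) (hw₁ : -1 ≤ w)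
    (hw : w * exp w = -(a ^ 2 * exp (-a - 1))) :
    (1 - a * exp (-(a + 1 + w))) / (a + 1 + w) < 1 / a := by
  have hζ : 0 < a + 1 + w := by linarith
  have hnum : 1 - a * exp (-(a + 1 + w)) = (a + w) / a := by
    rw [exp_neg_add_add_eq ha.ne' hw]
    field_simp
    ring
  rw [hnum, div_div, div_lt_div_iff₀ (by positivity) ha]
  nlinarith

/-- For η ∈ [0,1) and ζ = 2 − η + W₀(−(1−η)²e^{η−2}),
(1 − (1−η)e^{−ζ})/ζ < 1/(1−η). -/
theorem stmt_14 (W : ℝ → ℝ)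
    (hW : ∀ x : ℝ, -(1 / Real.exp 1) ≤ x → W x * Real.exp (W x) = x)
    (hW' : ∀ x : ℝ, -(1 / Real.exp 1) ≤ x → -1 ≤ W x)
    (η ζ : ℝ) (hη : η ∈ Set.Ico (0:ℝ) 1)
    (hζ : ζ = 2 - η + W (-((1 - η) ^ 2 * Real.exp (η - 2)))) :
    (1 - (1 - η) * Real.exp (-ζ)) / ζ < 1 / (1 - η) := by
  obtain ⟨hη0, hη1⟩ := hη
  rw [show η - 2 = -(1 - η) - 1 by ring] at hζ
  have hdom : -(1 / exp 1) ≤ -((1 - η) ^ 2 * exp (-(1 - η) - 1)) := by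
    rw [one_div, ← exp_neg, neg_le_neg_iff]
    exact sq_mul_exp_neg_sub_one_le (by linarith) (by linarith)
  rw [show ζ = (1 - η) + 1 + W _ by rw [hζ]; ring]
  exact one_sub_mul_exp_neg_div_lt (by linarith) (hW' _ hdom) (hW _ hdom)
end

section
/- Let W₀ be the principal branch of the Lambert W function and, for η ∈ [0,1), set h(η) = −(1−η)²e^{η−2} and Q(η) = (1−η)·(2 − η + W₀(h(η)))/(1 − η + W₀(h(η))). Then lim_{η → 1⁻} Q(η) = 1. -/
/-!
Write `ε = 1 - η` and `u = W₀(h(η))`. Since `-1 ≤ u ≤ 0` we have `e⁻¹ ≤ eᵘ`, so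
`-u ≤ -u eᵘ e = ε² e^{-ε} ≤ ε²`. Hence `Q(η) = ε + ε / (ε + u)` is squeezed between `1` and
`ε + 1 / (1 - ε) ≤ 1 + 3ε`.
-/

open Real Filter Topology Set

lemma mul_exp_mul_exp_one_le_self {u : ℝ} (hu : -1 ≤ u) (hu0 : u ≤ 0) :
    u * exp u * exp 1 ≤ u := by
  have h : 1 ≤ exp (u + 1) := one_le_exp (by linarith)
  rw [mul_assoc, ← exp_add]
  nlinarith

lemma neg_one_div_exp_one_le_lambertArg {η : ℝ} (h0 : 0 ≤ η) (h1 : η ≤ 1) :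
    -(1 / exp 1) ≤ -((1 - η) ^ 2 * exp (η - 2)) := by
  have hsq : (1 - η) ^ 2 ≤ 1 := by nlinarith
  have hexp : exp (η - 2) ≤ exp (-1) := exp_le_exp.2 (by linarith)
  rw [neg_le_neg_iff, one_div, ← exp_neg]
  nlinarith [exp_pos (η - 2)]

lemma neg_sq_le_lambertArg_mul_exp_one {η : ℝ} (h1 : η ≤ 1) :
    -(1 - η) ^ 2 ≤ -((1 - η) ^ 2 * exp (η - 2)) * exp 1 := by
  have hexp : exp (η - 2) * exp 1 ≤ 1 := by
    rw [← exp_add, exp_le_one_iff]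
    linarith
  nlinarith [sq_nonneg (1 - η)]

lemma quotient_mem_Icc {ε u : ℝ} (hε : 0 < ε) (hε2 : ε ≤ 1 / 2) (hu : -ε ^ 2 ≤ u) (hu0 : u ≤ 0) :
    ε * (1 + ε + u) / (ε + u) ∈ Icc 1 (1 + 3 * ε) := by
  have hd : 0 < ε + u := by nlinarith
  constructor
  · rw [le_div_iff₀ hd]
    nlinarith
  · rw [div_le_iff₀ hd]
    nlinarith

lemma lambert_quotient_mem_Icc {η u : ℝ} (hη : 1 / 2 ≤ η) (hη1 : η < 1) (hu : -1 ≤ u)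
    (hux : u * exp u = -((1 - η) ^ 2 * exp (η - 2))) :
    (1 - η) * (2 - η + u) / (1 - η + u) ∈ Icc 1 (1 + 3 * (1 - η)) := by
  have hu0 : u ≤ 0 := by
    refine nonpos_of_mul_nonpos_left (b := exp u) ?_ (exp_pos u)
    rw [hux]
    nlinarith [exp_pos (η - 2), sq_nonneg (1 - η)]
  have hlow : -(1 - η) ^ 2 ≤ u := by
    have := mul_exp_mul_exp_one_le_self hu hu0
    rw [hux] at this
    linarith [neg_sq_le_lambertArg_mul_exp_one hη1.le]
  rw [show 2 - η = 1 + (1 - η) by ring]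
  exact quotient_mem_Icc (by linarith) (by linarith) hlow hu0

/-- With W₀ the principal Lambert W branch,
h(η) = −(1−η)²e^{η−2} and Q(η) = (1−η)·(2 − η + W₀(h(η)))/(1 − η + W₀(h(η))),
one has lim_{η → 1⁻} Q(η) = 1. -/
theorem stmt_19 (W : ℝ → ℝ)
    (hW : ∀ x : ℝ, -(1 / Real.exp 1) ≤ x → W x * Real.exp (W x) = x)
    (hW' : ∀ x : ℝ, -(1 / Real.exp 1) ≤ x → -1 ≤ W x) :
    Filter.Tendsto
      (fun η : ℝ =>
        (1 - η) * (2 - η + W (-((1 - η) ^ 2 * Real.exp (η - 2))))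
          / (1 - η + W (-((1 - η) ^ 2 * Real.exp (η - 2)))))
      (nhdsWithin 1 (Set.Iio 1)) (nhds 1) := by
  have hbounds : ∀ η ∈ Ioo (1 / 2 : ℝ) 1, _ := fun η hη =>
    have harg := neg_one_div_exp_one_le_lambertArg (by linarith [hη.1]) hη.2.le
    lambert_quotient_mem_Icc hη.1.le hη.2 (hW' _ harg) (hW _ harg)
  have hupper : Tendsto (fun η : ℝ => 1 + 3 * (1 - η)) (𝓝[<] 1) (𝓝 1) :=
    (Continuous.tendsto' (by fun_prop) 1 1 (by norm_num)).mono_left nhdsWithin_le_nhds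
  have hnear : Ioo (1 / 2 : ℝ) 1 ∈ 𝓝[<] (1 : ℝ) := Ioo_mem_nhdsLT (by norm_num)
  refine tendsto_of_tendsto_of_tendsto_of_le_of_le' tendsto_const_nhds hupper ?_ ?_
  · filter_upwards [hnear] with η hη using (hbounds η hη).1
  · filter_upwards [hnear] with η hη using (hbounds η hη).2
end
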